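/- arXiv:math/0207135 — 7 statements merged into one kernel-verified Lean document; each statement's English description precedes it below -/
import Mathlib

section
/- Let M be a matroid on a finite set V with bases Γ, and let A, B ∈ Γ be bases whose incidence vectors 1_A, 1_B span an edge (1-dimensional face) of the matroid polytope conv{1_C : C ∈ Γ} ⊂ ℝ^V. Then 1_A − 1_B = e_u − e_v for some u, v ∈ V; that is, |A \ B| = |B \ A| = 1. -/
open scoped Classical

/-- The incidence vector of a subset `B` of a finite type `V`. -/
noncomputable def incVec {V : Type*} (B : Set V) : V → ℝ :=
  fun v => if v ∈ B then 1 else 0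

/-- The matroid polytope: the convex hull of the incidence vectors of the bases. -/
noncomputable def matroidPolytope {V : Type*} (M : Matroid V) : Set (V → ℝ) :=
  convexHull ℝ {x | ∃ B, M.IsBase B ∧ x = incVec B}

/-!
Take `u ∈ A \ B`. Symmetric basis exchange yields `v ∈ B \ A` such that both
`A' = A - u + v` and `B' = B - v + u` are bases. Since `1_{A'} + 1_{B'} = 1_A + 1_B`, the
segment `[1_{A'}, 1_{B'}]` has the same midpoint as the edge `[1_A, 1_B]`, so extremality of the
edge puts `1_{A'}` on it. A `0/1`-vector on a segment between `0/1`-vectors is an endpoint, and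
`1_{A'} ≠ 1_A` because `v ∈ A'`; hence `B = A'`.
-/

open Set

theorem Set.sdiff_insert_sdiff_singleton {α : Type*} {A : Set α} {u v : α} (hu : u ∈ A)
    (hv : v ∉ A) : A \ insert v (A \ {u}) = {u} := by
  have huv : u ≠ v := ne_of_mem_of_not_mem hu hv
  ext w
  simp only [mem_sdiff, mem_insert_iff, mem_singleton_iff]
  grind

theorem Set.insert_sdiff_singleton_sdiff {α : Type*} {A : Set α} {u v : α} (hv : v ∉ A) :
    insert v (A \ {u}) \ A = {v} := by
  ext w
  simp only [mem_sdiff, mem_insert_iff, mem_singleton_iff]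
  grind

namespace Matroid

variable {α : Type*} {M : Matroid α} {A B : Set α} {u : α}

theorem IsBase.exists_symm_exchange (hA : M.IsBase A) (hB : M.IsBase B) (hu : u ∈ A \ B) :
    ∃ v ∈ B \ A, M.IsBase (insert v (A \ {u})) ∧ M.IsBase (insert u B \ {v}) := by
  have huE : u ∈ M.E := hA.subset_ground hu.1
  have hC := hB.fundCircuit_isCircuit huE hu.2
  have hK := hA.compl_closure_sdiff_singleton_isCocircuit hu.1
  have huK : u ∈ M.E \ M.closure (A \ {u}) :=
    ⟨huE, hA.indep.notMem_closure_sdiff_of_mem hu.1⟩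
  -- A circuit and a cocircuit never meet in exactly one element.
  obtain ⟨v, ⟨hvC, hvE, hvcl⟩, hvu⟩ :=
    (hC.isCocircuit_inter_nontrivial hK ⟨u, M.mem_fundCircuit u B, huK⟩).exists_ne u
  have hvB : v ∈ B := by
    simpa [hvu] using M.fundCircuit_subset_insert u B hvC
  have hvA : v ∉ A := fun hvA ↦
    hvcl (M.subset_closure _ (sdiff_subset.trans hA.subset_ground) ⟨hvA, hvu⟩)
  refine ⟨v, ⟨hvB, hvA⟩, hA.exchange_base_of_notMem_closure hu.1 hvcl, ?_⟩
  refine hB.exchange_isBase_of_indep' hvB hu.2 ?_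
  exact (hB.indep.mem_fundCircuit_iff (by rwa [hB.closure_eq]) hu.2).1 hvC

end Matroid

theorem IsExtreme.mem_segment_of_add_eq {𝕜 E : Type*} [Field 𝕜] [LinearOrder 𝕜]
    [IsStrictOrderedRing 𝕜] [AddCommGroup E] [Module 𝕜 E] {P : Set E} {x y x' y' : E}
    (h : IsExtreme 𝕜 P (segment 𝕜 x y)) (hx' : x' ∈ P) (hy' : y' ∈ P)
    (hsum : x' + y' = x + y) : x' ∈ segment 𝕜 x y := by
  have hmid : midpoint 𝕜 x' y' = midpoint 𝕜 x y := by
    rw [midpoint_eq_smul_add, midpoint_eq_smul_add, hsum]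
  exact h.left_mem_of_mem_openSegment hx' hy' (hmid ▸ midpoint_mem_segment x y)
    (midpoint_mem_openSegment x' y')

section incVec

variable {V : Type*}

theorem incVec_injective : Function.Injective (incVec (V := V)) := by
  intro A B h
  ext w
  have hw := congrFun h w
  by_cases hA : w ∈ A <;> by_cases hB : w ∈ B <;> simp_all [incVec]

theorem incVec_mem_matroidPolytope {M : Matroid V} {B : Set V} (hB : M.IsBase B) :
    incVec B ∈ matroidPolytope M :=
  subset_convexHull ℝ _ ⟨B, hB, rfl⟩

theorem incVec_sub_incVec (A B : Set V) :
    incVec A - incVec B = incVec (A \ B) - incVec (B \ A) := by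
  ext w
  by_cases hA : w ∈ A <;> by_cases hB : w ∈ B <;> simp [incVec, hA, hB]

theorem incVec_singleton (u : V) : incVec {u} = fun w => if w = u then (1 : ℝ) else 0 :=
  rfl

theorem incVec_exchange_add {A B : Set V} {u v : V} (hu : u ∈ A \ B) (hv : v ∈ B \ A) :
    incVec (insert v (A \ {u})) + incVec (insert u B \ {v}) = incVec A + incVec B := by
  have huv : u ≠ v := ne_of_mem_of_not_mem hu.1 hv.2
  ext w
  by_cases hwu : w = u
  · simp [incVec, hwu, hu.1, hu.2, huv]
  by_cases hwv : w = v
  · simp [incVec, hwv, hv.1, hv.2, huv.symm]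
  simp [incVec, hwu, hwv]

theorem eq_or_eq_of_incVec_mem_segment {A B C : Set V}
    (h : incVec C ∈ segment ℝ (incVec A) (incVec B)) : C = A ∨ C = B := by
  obtain ⟨a, b, -, -, hab, hC⟩ := h
  by_cases hAB : A = B
  · subst hAB
    left
    apply incVec_injective
    rw [← hC, ← add_smul, hab, one_smul]
  obtain ⟨w, hw⟩ : ∃ w, ¬(w ∈ A ↔ w ∈ B) := by
    by_contra! h
    exact hAB (Set.ext h)
  have hCw := congrFun hC w
  have hab01 : a = 0 ∨ b = 0 := by
    by_cases hwA : w ∈ A <;> by_cases hwB : w ∈ B <;> by_cases hwC : w ∈ C <;>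
      simp [incVec, hwA, hwB, hwC] at hw hCw <;> first | left; linarith | right; linarith
  rcases hab01 with rfl | rfl
  · right
    apply incVec_injective
    rw [← hC, show b = 1 by linarith]
    simp
  · left
    apply incVec_injective
    rw [← hC, show a = 1 by linarith]
    simp

end incVec

theorem matroid_polytope_edge_general {V : Type*} (M : Matroid V)
    (A B : Set V) (hA : M.IsBase A) (hB : M.IsBase B) (hne : incVec A ≠ incVec B)
    (hedge : IsExtreme ℝ (matroidPolytope M) (segment ℝ (incVec A) (incVec B))) :
    ∃ u v : V,
      (incVec A - incVec B = (fun w => if w = u then (1 : ℝ) else 0) -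
        (fun w => if w = v then (1 : ℝ) else 0)) ∧
      A \ B = {u} ∧ B \ A = {v} := by
  obtain ⟨u, hu⟩ : (A \ B).Nonempty :=
    sdiff_nonempty.2 fun hAB ↦ hne (congrArg incVec (hA.eq_of_subset_isBase hB hAB))
  obtain ⟨v, hv, hA', hB'⟩ := hA.exists_symm_exchange hB hu
  have hA'_mem : incVec (insert v (A \ {u})) ∈ segment ℝ (incVec A) (incVec B) :=
    hedge.mem_segment_of_add_eq (incVec_mem_matroidPolytope hA')
      (incVec_mem_matroidPolytope hB') (incVec_exchange_add hu hv)
  have hB_eq : insert v (A \ {u}) = B :=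
    (eq_or_eq_of_incVec_mem_segment hA'_mem).resolve_left fun h ↦ hv.2 (h ▸ mem_insert v _)
  have hAB : A \ B = {u} := hB_eq ▸ sdiff_insert_sdiff_singleton hu.1 hv.2
  have hBA : B \ A = {v} := hB_eq ▸ insert_sdiff_singleton_sdiff hv.2
  exact ⟨u, v, by rw [incVec_sub_incVec, hAB, hBA, incVec_singleton, incVec_singleton], hAB, hBA⟩

/-- If the incidence vectors of two bases `A, B` of a matroid on a finite set span an
edge (a 1-dimensional face, formalized as: the segment between them is an extreme
subset and they are distinct) of the matroid polytope, then
`1_A − 1_B = e_u − e_v` for some `u, v ∈ V`; in particular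
`A \ B` and `B \ A` are singletons. -/
theorem matroid_polytope_edge {V : Type*} [Fintype V] (M : Matroid V)
    (A B : Set V) (hA : M.IsBase A) (hB : M.IsBase B) (hne : incVec A ≠ incVec B)
    (hedge : IsExtreme ℝ (matroidPolytope M) (segment ℝ (incVec A) (incVec B))) :
    ∃ u v : V,
      (incVec A - incVec B = (fun w => if w = u then (1 : ℝ) else 0) -
        (fun w => if w = v then (1 : ℝ) else 0)) ∧
      A \ B = {u} ∧ B \ A = {v} :=
  matroid_polytope_edge_general M A B hA hB hne hedge
end

section
/- Let I ⊆ 𝔽[x₁,…,x_d] have colength n, let ≺ be a monomial order with initial staircase λ = {λ₁ ≺ ⋯ ≺ λ_n}, and let μ = {μ₁ ≺ ⋯ ≺ μ_n} be any basic set of I (its monomials give a basis of 𝔽[x]/I), listed in increasing ≺-order. Then λ_k ⪯ μ_k for each k = 1,…,n. -/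
/-! Reducing modulo `I` by elements with a prescribed leading monomial (a normal form
computation) shows that the class of any monomial `x^v` is a combination of the classes of
staircase monomials `x^w` with `w ⪯ v`. If `μ_k ≺ λ_k`, then `μ_1, …, μ_k ≺ λ_k`, so the `k`
classes of `x^{μ_1}, …, x^{μ_k}`, which are linearly independent because `μ` is basic, lie in the
span of the `k - 1` classes of `x^{λ_1}, …, x^{λ_{k-1}}`: a contradiction. -/

open MvPolynomial
open scoped MonomialOrder

/-- A staircase of exponent vectors: a downward-closed finite set. -/
def IsStaircaseF {d : ℕ} (l : Finset (Fin d →₀ ℕ)) : Prop :=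
  ∀ u v : Fin d →₀ ℕ, v ∈ l → u ≤ v → u ∈ l

/-- The initial ideal of `I` under a monomial order `m`. -/
noncomputable def initialIdeal {d : ℕ} {F : Type*} [Field F] (m : MonomialOrder (Fin d))
    (I : Ideal (MvPolynomial (Fin d) F)) : Ideal (MvPolynomial (Fin d) F) :=
  Ideal.span {p | ∃ f ∈ I, f ≠ 0 ∧ ∃ u ∈ f.support,
    (∀ v ∈ f.support, v ≼[m] u) ∧ p = monomial u (1 : F)}

/-- The monomial ideal of a staircase `l`. -/
noncomputable def staircaseIdeal {d : ℕ} (F : Type*) [Field F] (l : Finset (Fin d →₀ ℕ)) :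
    Ideal (MvPolynomial (Fin d) F) :=
  Ideal.span {p | ∃ u : Fin d →₀ ℕ, u ∉ l ∧ p = monomial u (1 : F)}

/-- A finite set `s` of exponents is basic for `I` if the span of the corresponding
monomials meets `I` only in `0`. -/
def IsBasic {d : ℕ} {F : Type*} [Field F] (I : Ideal (MvPolynomial (Fin d) F))
    (s : Finset (Fin d →₀ ℕ)) : Prop :=
  ∀ f ∈ Submodule.span F {p | ∃ v ∈ s, p = monomial v (1 : F)}, f ∈ I → f = 0

namespace MonomialOrder

variable {σ R : Type*} [CommRing R] (m : MonomialOrder σ)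

theorem lt_degree_of_mem_support_sub_leadingTerm {f : MvPolynomial σ R} {w : σ →₀ ℕ}
    (hw : w ∈ (f - m.leadingTerm f).support) : w ≺[m] m.degree f := by
  refine lt_of_le_of_ne ((m.le_degree hw).trans (m.degree_sub_leadingTerm_le f)) ?_
  intro hw_eq
  rw [m.toSyn.injective hw_eq, mem_support_iff] at hw
  classical
  simp [leadingTerm, leadingCoeff, coeff_monomial] at hw

end MonomialOrder

theorem LinearIndependent.card_le_card_of_subset_span_image {R M ι κ : Type*} [Ring R]
    [StrongRankCondition R] [AddCommGroup M] [Module R M] [Fintype ι] {v : ι → M}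
    (hv : LinearIndependent R v) {s : Finset κ} {f : κ → M}
    (hspan : Set.range v ⊆ Submodule.span R (f '' s)) : Fintype.card ι ≤ s.card := by
  classical
  have := linearIndependent_le_span_aux' v hv ↑(s.image f) (by rwa [Finset.coe_image])
  simp only [Finset.coe_sort_coe, Fintype.card_coe] at this
  exact this.trans Finset.card_image_le

section Quotient

variable {σ F : Type*} [Field F] {I : Ideal (MvPolynomial σ F)}

theorem Ideal.Quotient.mk_mem_of_forall_mem_support {P : Submodule F (MvPolynomial σ F ⧸ I)}
    {q : MvPolynomial σ F} (h : ∀ w ∈ q.support, Ideal.Quotient.mk I (monomial w 1) ∈ P) :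
    Ideal.Quotient.mk I q ∈ P := by
  rw [q.as_sum, map_sum]
  refine Submodule.sum_mem _ fun w hw => ?_
  rw [← mul_one (coeff w q), ← smul_eq_mul, ← smul_monomial, ← Ideal.Quotient.mkₐ_eq_mk F,
    map_smul]
  exact P.smul_mem _ (h w hw)

end Quotient

section Staircase

variable {d : ℕ} {F : Type*} [Field F] {m : MonomialOrder (Fin d)}
  {I : Ideal (MvPolynomial (Fin d) F)}

theorem initialIdeal_eq_span_monomial_degree :
    initialIdeal m I = Ideal.span ((fun u => monomial u (1 : F)) ''
      {u | ∃ f ∈ I, f ≠ 0 ∧ m.degree f = u}) := by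
  unfold initialIdeal
  congr 1
  ext p
  constructor
  · rintro ⟨f, hfI, hf0, u, hu, hmax, rfl⟩
    refine ⟨u, ⟨f, hfI, hf0, m.toSyn.injective ?_⟩, rfl⟩
    exact le_antisymm (m.degree_le_iff.mpr hmax) (m.le_degree hu)
  · rintro ⟨_, ⟨f, hfI, hf0, rfl⟩, rfl⟩
    exact ⟨f, hfI, hf0, _, m.degree_mem_support hf0, fun w hw => m.le_degree hw, rfl⟩

theorem exists_degree_eq_of_monomial_mem_initialIdeal {v : Fin d →₀ ℕ}
    (hv : monomial v (1 : F) ∈ initialIdeal m I) : ∃ g ∈ I, g ≠ 0 ∧ m.degree g = v := by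
  classical
  rw [initialIdeal_eq_span_monomial_degree, mem_ideal_span_monomial_image] at hv
  obtain ⟨u, ⟨f, hfI, hf0, hfu⟩, huv⟩ := hv v (by simp)
  have hmon : monomial (v - u) (1 : F) ≠ 0 := by simp
  refine ⟨monomial (v - u) 1 * f, I.mul_mem_left _ hfI, mul_ne_zero hmon hf0, ?_⟩
  rw [m.degree_mul hmon hf0, m.degree_monomial, if_neg one_ne_zero, hfu,
    tsub_add_cancel_of_le huv]

theorem mk_monomial_mem_span_staircase {L : Finset (Fin d →₀ ℕ)}
    (hinit : staircaseIdeal F L = initialIdeal m I) (v : Fin d →₀ ℕ) :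
    Ideal.Quotient.mk I (monomial v (1 : F)) ∈
      Submodule.span F ((fun w => Ideal.Quotient.mk I (monomial w (1 : F))) ''
        {w | w ∈ L ∧ w ≼[m] v}) := by
  induction hs : m.toSyn v using WellFoundedLT.induction generalizing v with
  | ind s ih =>
  subst hs
  by_cases hvL : v ∈ L
  · exact Submodule.subset_span ⟨v, ⟨hvL, le_rfl⟩, rfl⟩
  have hv : monomial v (1 : F) ∈ initialIdeal m I := hinit ▸ Ideal.subset_span ⟨v, hvL, rfl⟩
  obtain ⟨g, hgI, hg0, rfl⟩ := exists_degree_eq_of_monomial_mem_initialIdeal hv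
  have hc : m.leadingCoeff g ≠ 0 := m.leadingCoeff_ne_zero_iff.mpr hg0
  have hmk : Ideal.Quotient.mk I (monomial (m.degree g) (1 : F)) =
      (m.leadingCoeff g)⁻¹ • Ideal.Quotient.mk I (-(g - m.leadingTerm g)) := by
    rw [show monomial (m.degree g) (1 : F) = (m.leadingCoeff g)⁻¹ • m.leadingTerm g by
      rw [MonomialOrder.leadingTerm, smul_monomial, smul_eq_mul, inv_mul_cancel₀ hc]]
    rw [← Ideal.Quotient.mkₐ_eq_mk F, map_smul, neg_sub, Ideal.Quotient.mkₐ_eq_mk,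
      Ideal.Quotient.eq.mpr (by rwa [sub_sub_cancel])]
  rw [hmk]
  refine Submodule.smul_mem _ _ (Ideal.Quotient.mk_mem_of_forall_mem_support fun w hw => ?_)
  rw [support_neg] at hw
  have hlt := m.lt_degree_of_mem_support_sub_leadingTerm hw
  refine Submodule.span_mono (Set.image_mono ?_) (ih _ hlt w rfl)
  exact fun x hx => ⟨hx.1, hx.2.trans hlt.le⟩

theorem IsBasic.linearIndependent {s : Finset (Fin d →₀ ℕ)} (hs : IsBasic I s) :
    LinearIndependent F (fun v : s => Ideal.Quotient.mk I (monomial (v : Fin d →₀ ℕ) (1 : F))) := by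
  have hmon := (basisMonomials (Fin d) F).linearIndependent.comp ((↑) : s → Fin d →₀ ℕ)
    Subtype.val_injective
  have hrange : Set.range (basisMonomials (Fin d) F ∘ ((↑) : s → Fin d →₀ ℕ)) =
      {p | ∃ v ∈ s, p = monomial v 1} := by
    ext p
    simp [coe_basisMonomials, eq_comm]
  refine hmon.map (f := (Ideal.Quotient.mkₐ F I).toLinearMap) ?_
  rw [Submodule.disjoint_def, hrange]
  exact fun p hp hpI => hs p hp (Ideal.Quotient.eq_zero_iff_mem.mp hpI)

theorem mk_monomial_mem_span_of_lt {n : ℕ} {l : Fin n → Fin d →₀ ℕ}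
    (hlmono : StrictMono (fun k => m.toSyn (l k)))
    (hinit : staircaseIdeal F (Finset.image l Finset.univ) = initialIdeal m I)
    {k : Fin n} {v : Fin d →₀ ℕ} (hv : v ≺[m] l k) :
    Ideal.Quotient.mk I (monomial v (1 : F)) ∈ Submodule.span F
      ((fun i => Ideal.Quotient.mk I (monomial (l i) (1 : F))) '' Set.Iio k) := by
  refine Submodule.span_mono ?_ (mk_monomial_mem_span_staircase hinit v)
  rintro _ ⟨w, ⟨hwL, hwv⟩, rfl⟩
  obtain ⟨i, -, rfl⟩ := Finset.mem_image.mp hwL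
  exact ⟨i, hlmono.lt_iff_lt.mp (hwv.trans_lt hv), rfl⟩

end Staircase

theorem initial_staircase_entrywise_le_general {d n : ℕ} {F : Type*} [Field F]
    (I : Ideal (MvPolynomial (Fin d) F))
    (m : MonomialOrder (Fin d))
    (l : Fin n → (Fin d →₀ ℕ)) (hlmono : StrictMono (fun k => m.toSyn (l k)))
    (hinit : staircaseIdeal F (Finset.image l Finset.univ) = initialIdeal m I)
    (μ : Fin n → (Fin d →₀ ℕ)) (hμmono : StrictMono (fun k => m.toSyn (μ k)))
    (hμbasic : IsBasic I (Finset.image μ Finset.univ)) :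
    ∀ k : Fin n, l k ≼[m] μ k := by
  classical
  intro k
  by_contra! hlt
  have hμ_indep : LinearIndependent F
      (fun j : Finset.Iic k => Ideal.Quotient.mk I (monomial (μ j) (1 : F))) :=
    (hμbasic.linearIndependent.comp (fun j => ⟨μ j, Finset.mem_image_of_mem μ (Finset.mem_univ j)⟩)
      fun a b h => hμmono.injective (congrArg (fun x => m.toSyn x.1) h)).comp
      Subtype.val Subtype.val_injective
  have hcard := hμ_indep.card_le_card_of_subset_span_image (s := Finset.Iio k) <| by
    rintro _ ⟨j, rfl⟩
    rw [Finset.coe_Iio]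
    exact mk_monomial_mem_span_of_lt hlmono hinit
      ((hμmono.monotone (Finset.mem_Iic.mp j.2)).trans_lt hlt)
  simp only [Fintype.card_coe, Fin.card_Iic, Fin.card_Iio] at hcard
  omega

/-- Let `I` have colength `n`, let `l : Fin n → ℕ^d` enumerate in strictly increasing
`m`-order the initial staircase of `I` under the monomial order `m`, and let
`μ : Fin n → ℕ^d` enumerate in strictly increasing `m`-order any basic set of `I`.
Then `l k ≼ μ k` for every `k`. -/
theorem initial_staircase_entrywise_le {d n : ℕ} {F : Type*} [Field F]
    (I : Ideal (MvPolynomial (Fin d) F))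
    (hlen : Module.finrank F (MvPolynomial (Fin d) F ⧸ I) = n)
    (m : MonomialOrder (Fin d))
    (l : Fin n → (Fin d →₀ ℕ)) (hlmono : StrictMono (fun k => m.toSyn (l k)))
    (hst : IsStaircaseF (Finset.image l Finset.univ))
    (hlcard : (Finset.image l Finset.univ).card = n)
    (hinit : staircaseIdeal F (Finset.image l Finset.univ) = initialIdeal m I)
    (μ : Fin n → (Fin d →₀ ℕ)) (hμmono : StrictMono (fun k => m.toSyn (μ k)))
    (hμbasic : IsBasic I (Finset.image μ Finset.univ)) :
    ∀ k : Fin n, l k ≼[m] μ k :=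
  initial_staircase_entrywise_le_general I m l hlmono hinit μ hμmono hμbasic
end

section
/- Let I ⊆ 𝔽[x₁,…,x_d] be an ideal of colength n, let w ∈ ℝ₊^d be generic (inducing a total order on monomials by u ↦ w·u), and let λ be the initial staircase of I under w. Then for every basic set μ ≠ λ of I contained in V_n^d, w·∑λ < w·∑μ; in particular ∑λ is the unique minimizer of w over the basis polytope B(I) = conv{∑μ : μ basic, μ ⊂ V_n^d}. -/
open MvPolynomial

/-- The weight of an exponent vector `u` under `w`. -/
noncomputable def wt {d : ℕ} (w : Fin d → ℝ) (u : Fin d →₀ ℕ) : ℝ := ∑ i, w i * u i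

/-- The dot product on `ℝ^d`. -/
noncomputable def rdot {d : ℕ} (w x : Fin d → ℝ) : ℝ := ∑ i, w i * x i

/-- Membership in `V_n^d`, the union of all `n`-staircases. -/
def memV {d : ℕ} (n : ℕ) (v : Fin d →₀ ℕ) : Prop := ∏ i, (v i + 1) ≤ n

/-- The initial ideal of `I` under a weight vector `w`: generated by the monomials of
`w`-maximal weight of the nonzero elements of `I`. -/
noncomputable def initialIdealW {d : ℕ} {F : Type*} [Field F] (w : Fin d → ℝ)
    (I : Ideal (MvPolynomial (Fin d) F)) : Ideal (MvPolynomial (Fin d) F) :=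
  Ideal.span {p | ∃ f ∈ I, f ≠ 0 ∧ ∃ u ∈ f.support,
    (∀ v ∈ f.support, wt w v ≤ wt w u) ∧ p = monomial u (1 : F)}

/-- The coordinatewise sum `∑ λ` of a finite set of exponent vectors, as a real vector. -/
noncomputable def sumVec {d : ℕ} (l : Finset (Fin d →₀ ℕ)) : Fin d → ℝ :=
  fun i => ∑ v ∈ l, (v i : ℝ)

/-! Reducing monomials modulo `I` along the weight order (possible because the initial ideal is
the staircase ideal of `λ`) writes each `x^u` as a combination of standard monomials `x^v`,
`v ∈ λ`, of weight at most `w·u`. For a basic set `μ` of size `n` these reductions are linearly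
independent, so some term of the determinant of their coefficient matrix is nonzero: a bijection
`λ → μ` that never decreases weight. By genericity it increases weight somewhere unless `μ = λ`,
and summing gives `w·∑λ < w·∑μ`. The convex-hull statements follow since
`{x | x = ∑λ ∨ w·∑λ < w·x}` is convex. -/

open Finset in
theorem Matrix.exists_perm_forall_ne_zero_of_det_ne_zero {n R : Type*} [Fintype n]
    [DecidableEq n] [CommRing R] {M : Matrix n n R} (h : M.det ≠ 0) :
    ∃ σ : Equiv.Perm n, ∀ i, M (σ i) i ≠ 0 := by
  rw [Matrix.det_apply] at h
  obtain ⟨σ, -, hσ⟩ := exists_ne_zero_of_sum_ne_zero h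
  exact ⟨σ, fun i hi => hσ (by
    rw [prod_eq_zero (f := fun j => M (σ j) j) (mem_univ i) hi, smul_zero])⟩

theorem Finset.sum_lt_sum_of_equiv {α β : Type*} [AddCommMonoid β] [PartialOrder β]
    [IsOrderedCancelAddMonoid β] {s t : Finset α} {f : α → β} (hf : Function.Injective f)
    (τ : s ≃ t) (hle : ∀ x : s, f x ≤ f (τ x)) (hst : s ≠ t) :
    ∑ x ∈ s, f x < ∑ x ∈ t, f x := by
  obtain ⟨x₀, hx₀⟩ : ∃ x : s, f x < f (τ x) := by
    by_contra! hge
    have hfix : ∀ x : s, (x : α) = τ x := fun x => hf ((hle x).eq_of_not_lt (hge x))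
    refine hst (eq_of_subset_of_card_le (fun a ha => ?_) ?_)
    · rw [show a = τ ⟨a, ha⟩ from hfix ⟨a, ha⟩]
      exact (τ _).2
    simpa using (Fintype.card_congr τ).ge
  calc ∑ x ∈ s, f x = ∑ x : s, f x := (sum_coe_sort s f).symm
    _ < ∑ x : s, f (τ x) := sum_lt_sum (fun x _ => hle x) ⟨x₀, mem_univ _, hx₀⟩
    _ = ∑ x ∈ t, f x := by rw [Equiv.sum_comp τ (fun y : t => f y), sum_coe_sort]

theorem convex_setOf_eq_or_lt {E : Type*} [AddCommGroup E] [Module ℝ E] {f : E → ℝ}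
    (hf : ConcaveOn ℝ Set.univ f) (p : E) : Convex ℝ {x | x = p ∨ f p < f x} := by
  refine convex_iff_forall_pos.mpr fun x hx y hy a b ha hb hab => ?_
  have hconc := hf.2 (Set.mem_univ x) (Set.mem_univ y) ha.le hb.le hab
  simp only [smul_eq_mul] at hconc
  obtain rfl : a = 1 - b := by linarith
  rcases hx with rfl | hx <;> rcases hy with rfl | hy
  · exact Or.inl (Convex.combo_self hab _)
  · exact Or.inr (by linarith [mul_lt_mul_of_pos_left hy hb])
  · exact Or.inr (by linarith [mul_lt_mul_of_pos_left hx ha])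
  · exact Or.inr (by linarith [mul_lt_mul_of_pos_left hx ha, mul_lt_mul_of_pos_left hy hb])

section Weights

variable {d : ℕ} {w : Fin d → ℝ}

theorem wt_add (w : Fin d → ℝ) (u v : Fin d →₀ ℕ) : wt w (u + v) = wt w u + wt w v := by
  simp [wt, mul_add, Finset.sum_add_distrib]

theorem rdot_sumVec (w : Fin d → ℝ) (s : Finset (Fin d →₀ ℕ)) :
    rdot w (sumVec s) = ∑ v ∈ s, wt w v := by
  simp only [rdot, sumVec, wt, Finset.mul_sum]
  exact Finset.sum_comm

theorem concaveOn_rdot (w : Fin d → ℝ) : ConcaveOn ℝ Set.univ (rdot w) :=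
  (dotProductBilin ℝ ℝ w).concaveOn convex_univ

theorem pos_of_nonneg_of_injective_wt (hw : ∀ i, 0 ≤ w i) (hgen : Function.Injective (wt w))
    (i : Fin d) : 0 < w i := by
  refine (hw i).lt_of_ne fun h => ?_
  have := @hgen (Finsupp.single i 1) 0 (by simp [wt, Finsupp.single_apply, ← h])
  simp at this

theorem finite_setOf_wt_lt (hw : ∀ i, 0 < w i) (c : ℝ) : {v | wt w v < c}.Finite := by
  refine (Set.finite_Iic (Finsupp.equivFunOnFinite.symm fun i => ⌈c / w i⌉₊)).subset
    fun v (hv : wt w v < c) i => ?_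
  have hcoord : w i * v i ≤ wt w v :=
    Finset.single_le_sum (f := fun j => w j * v j)
      (fun j _ => mul_nonneg (hw j).le (Nat.cast_nonneg _)) (Finset.mem_univ i)
  have hvi : (v i : ℝ) ≤ c / w i := by
    rw [le_div_iff₀ (hw i)]
    linarith
  simpa using Nat.cast_le.mp (hvi.trans (Nat.le_ceil _))

theorem wellFounded_wt_lt (hw : ∀ i, 0 < w i) :
    WellFounded fun u v : Fin d →₀ ℕ => wt w u < wt w v :=
  Subrelation.wf
    (fun {u v} huv => Set.ncard_lt_ncard
      (Set.ssubset_iff_of_subset (fun _ hx => lt_trans hx huv) |>.mpr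
        ⟨u, huv, fun h : wt w u < wt w u => lt_irrefl _ h⟩)
      (finite_setOf_wt_lt hw (wt w v)))
    (measure fun u => {x | wt w x < wt w u}.ncard).wf

end Weights

section Reduction

variable {d : ℕ} {F : Type*} [Field F] {I : Ideal (MvPolynomial (Fin d) F)} {w : Fin d → ℝ}
  {l : Finset (Fin d →₀ ℕ)}

theorem span_monomial_eq_restrictSupport (s : Finset (Fin d →₀ ℕ)) :
    Submodule.span F {p | ∃ v ∈ s, p = monomial v (1 : F)} = restrictSupport F ↑s := by
  rw [restrictSupport_eq_span]
  congr 1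
  ext p
  simp [eq_comm]

theorem staircaseIdeal_eq_span_image (F : Type*) [Field F] (l : Finset (Fin d →₀ ℕ)) :
    staircaseIdeal F l = Ideal.span ((monomial · (1 : F)) '' (↑l)ᶜ) := by
  unfold staircaseIdeal
  congr 1
  ext p
  simp [eq_comm]

theorem initialIdealW_eq_span_image (w : Fin d → ℝ) (I : Ideal (MvPolynomial (Fin d) F)) :
    initialIdealW w I = Ideal.span ((monomial · (1 : F)) ''
      {u | ∃ f ∈ I, u ∈ f.support ∧ ∀ v ∈ f.support, wt w v ≤ wt w u}) := by
  unfold initialIdealW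
  congr 1
  ext p
  constructor
  · rintro ⟨f, hfI, -, u, hu, hmax, rfl⟩
    exact ⟨u, ⟨f, hfI, hu, hmax⟩, rfl⟩
  · rintro ⟨u, ⟨f, hfI, hu, hmax⟩, rfl⟩
    exact ⟨f, hfI, fun hf0 => by simp [hf0] at hu, u, hu, hmax, rfl⟩

theorem monomial_mem_staircaseIdeal_iff (hst : IsStaircaseF l) {u : Fin d →₀ ℕ} :
    monomial u (1 : F) ∈ staircaseIdeal F l ↔ u ∉ l := by
  rw [staircaseIdeal_eq_span_image, mem_ideal_span_monomial_image]
  refine ⟨fun h hu => ?_, fun hu _ hu' =>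
    ⟨u, hu, (Finset.mem_singleton.mp (support_monomial_subset hu')).ge⟩⟩
  obtain ⟨v, hv, hvu⟩ := h u (by simp)
  exact hv (hst v u hu hvu)

theorem isBasic_of_staircaseIdeal_eq_initialIdealW (hst : IsStaircaseF l)
    (hinit : staircaseIdeal F l = initialIdealW w I) : IsBasic I l := by
  intro f hf hfI
  by_contra hf0
  obtain ⟨u, hu, hmax⟩ := f.support.exists_max_image (wt w)
    (support_nonempty.mpr hf0)
  have hmem : monomial u (1 : F) ∈ initialIdealW w I :=
    Ideal.subset_span ⟨f, hfI, hf0, u, hu, hmax, rfl⟩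
  rw [← hinit, monomial_mem_staircaseIdeal_iff hst] at hmem
  rw [span_monomial_eq_restrictSupport, mem_restrictSupport_iff] at hf
  exact hmem (hf hu)

/-- The initial term of an element of `I` divides `x^u`; shifting that element by the
quotient monomial puts `u` in its support at maximal weight. -/
theorem exists_mem_ideal_mem_support_wt_le (hinit : staircaseIdeal F l = initialIdealW w I)
    {u : Fin d →₀ ℕ} (hu : u ∉ l) :
    ∃ g ∈ I, u ∈ g.support ∧ ∀ v ∈ g.support, wt w v ≤ wt w u := by
  classical
  have hmem : monomial u (1 : F) ∈ initialIdealW w I := hinit ▸ Ideal.subset_span ⟨u, hu, rfl⟩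
  rw [initialIdealW_eq_span_image, mem_ideal_span_monomial_image] at hmem
  obtain ⟨u', ⟨f, hfI, hu'f, hmax⟩, hle⟩ := hmem u (by simp)
  obtain ⟨s, rfl⟩ := exists_add_of_le hle
  refine ⟨monomial s 1 * f, I.mul_mem_left _ hfI, ?_, fun v hv => ?_⟩
  · rw [mem_support_iff, add_comm, coeff_monomial_mul, one_mul]
    exact mem_support_iff.mp hu'f
  · obtain ⟨a, ha, b, hb, rfl⟩ := Finset.mem_add.mp (support_mul _ _ hv)
    rw [Finset.mem_singleton.mp (support_monomial_subset ha), wt_add, wt_add]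
    linarith [hmax b hb]

theorem monomial_mem_restrictSupport_sup (hw : ∀ i, 0 < w i)
    (hgen : Function.Injective (wt w)) (hinit : staircaseIdeal F l = initialIdealW w I)
    (u : Fin d →₀ ℕ) :
    monomial u (1 : F) ∈
      restrictSupport F (↑l ∩ {v | wt w v ≤ wt w u}) ⊔ I.restrictScalars F := by
  induction u using (wellFounded_wt_lt hw).induction with
  | _ u ih =>
  by_cases hu : u ∈ l
  · exact Submodule.mem_sup_left (by simp [hu])
  obtain ⟨g, hgI, hug, hgwt⟩ := exists_mem_ideal_mem_support_wt_le hinit hu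
  set h := monomial u (1 : F) - (coeff u g)⁻¹ • g
  have hlow : ∀ v ∈ h.support, wt w v < wt w u := by
    intro v hv
    rw [mem_support_iff, coeff_sub, coeff_smul, coeff_monomial, smul_eq_mul] at hv
    by_cases hvu : u = v
    · subst hvu
      simp [inv_mul_cancel₀ (mem_support_iff.mp hug)] at hv
    · rw [if_neg hvu, zero_sub, neg_ne_zero] at hv
      exact (hgwt v (mem_support_iff.mpr (right_ne_zero_of_mul hv))).lt_of_ne
        (hgen.ne (Ne.symm hvu))
  rw [← sub_add_cancel (monomial u (1 : F)) ((coeff u g)⁻¹ • g)]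
  refine add_mem ?_ (Submodule.mem_sup_right (I.smul_of_tower_mem _ hgI))
  change h ∈ _
  rw [as_sum h]
  refine Submodule.sum_mem _ fun v hv => ?_
  rw [← mul_one (coeff v h), ← smul_eq_mul, ← smul_monomial]
  refine Submodule.smul_mem _ _ (sup_le_sup_right (restrictSupport_mono F ?_) _ (ih v (hlow v hv)))
  exact Set.inter_subset_inter_right _ fun x hx => hx.trans (hlow v hv).le

end Reduction

section Exchange

variable {d : ℕ} {F : Type*} [Field F] {I : Ideal (MvPolynomial (Fin d) F)}
  {l μ : Finset (Fin d →₀ ℕ)}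

/-- The matrix of coefficients of the `ρ u`, `u ∈ μ`, at `l` is invertible because `μ` is basic;
a nonzero term of its determinant gives `τ`. -/
theorem exists_equiv_coeff_ne_zero (hcard : μ.card = l.card) (hμ : IsBasic I μ)
    {ρ : (Fin d →₀ ℕ) → MvPolynomial (Fin d) F} (hρl : ∀ u, ((ρ u).support : Set (Fin d →₀ ℕ)) ⊆ l)
    (hρI : ∀ u, monomial u (1 : F) - ρ u ∈ I) :
    ∃ τ : l ≃ μ, ∀ v : l, coeff (v : Fin d →₀ ℕ) (ρ (τ v)) ≠ 0 := by
  classical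
  let e : l ≃ μ := Fintype.equivOfCardEq (by simp [hcard])
  let M : Matrix l l F := Matrix.of fun v v' => coeff (v' : Fin d →₀ ℕ) (ρ (e v))
  suffices hdet : M.det ≠ 0 by
    obtain ⟨σ, hσ⟩ := Matrix.exists_perm_forall_ne_zero_of_det_ne_zero hdet
    exact ⟨σ.trans e, hσ⟩
  intro h0
  obtain ⟨a, ha0, ha⟩ := Matrix.exists_vecMul_eq_zero_iff.mpr h0
  have hρsum : ∑ v, a v • ρ (e v) = 0 := by
    ext v'
    simp only [coeff_sum, coeff_smul, smul_eq_mul, coeff_zero]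
    by_cases hv' : v' ∈ l
    · exact congrFun ha ⟨v', hv'⟩
    · exact Finset.sum_eq_zero fun v _ => by
        rw [notMem_support_iff.mp fun h => hv' (hρl _ h), mul_zero]
  set p := ∑ v, a v • monomial (e v : Fin d →₀ ℕ) (1 : F)
  have hpI : p ∈ I := by
    have hp : p = ∑ v, a v • (monomial (e v : Fin d →₀ ℕ) (1 : F) - ρ (e v)) := by
      simp only [smul_sub, Finset.sum_sub_distrib, hρsum, sub_zero, p]
    rw [hp]
    exact Submodule.sum_mem _ fun v _ => I.smul_of_tower_mem _ (hρI _)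
  have hpspan : p ∈ Submodule.span F {p | ∃ u ∈ μ, p = monomial u (1 : F)} :=
    Submodule.sum_mem _ fun v _ =>
      Submodule.smul_mem _ _ (Submodule.subset_span ⟨e v, (e v).2, rfl⟩)
  have hp0 := hμ p hpspan hpI
  refine ha0 (funext fun v => ?_)
  have hcoeff := congrArg (coeff (e v : Fin d →₀ ℕ)) hp0
  simpa [p, coeff_sum, coeff_monomial, Subtype.val_inj] using hcoeff

theorem sum_wt_lt_sum_wt {w : Fin d → ℝ} (hw : ∀ i, 0 < w i)
    (hgen : Function.Injective (wt w)) (hinit : staircaseIdeal F l = initialIdealW w I)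
    (hcard : μ.card = l.card) (hμ : IsBasic I μ) (hne : μ ≠ l) :
    ∑ v ∈ l, wt w v < ∑ u ∈ μ, wt w u := by
  choose ρ hρ r hrI hρr using fun u =>
    Submodule.mem_sup.mp (monomial_mem_restrictSupport_sup (F := F) hw hgen hinit u)
  have hρI : ∀ u, monomial u (1 : F) - ρ u ∈ I := fun u => by
    rw [← hρr u, add_sub_cancel_left]
    exact hrI u
  obtain ⟨τ, hτ⟩ := exists_equiv_coeff_ne_zero hcard hμ
    (fun u => (hρ u).trans Set.inter_subset_left) hρI
  exact Finset.sum_lt_sum_of_equiv hgen τ (fun v => (hρ _ (mem_support_iff.mpr (hτ v))).2)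
    hne.symm

end Exchange

theorem memV_card_of_mem {d : ℕ} {l : Finset (Fin d →₀ ℕ)} (hst : IsStaircaseF l)
    {v : Fin d →₀ ℕ} (hv : v ∈ l) : memV l.card v := by
  classical
  calc ∏ i, (v i + 1) = (Finset.Iic v).card := by
        rw [Finsupp.card_Iic, Finset.prod_subset (Finset.subset_univ v.support)
          fun i _ hi => by simp [Finsupp.notMem_support_iff.mp hi]]
        simp
    _ ≤ l.card := Finset.card_le_card fun u hu => hst u v hv (Finset.mem_Iic.mp hu)

theorem initial_staircase_unique_min_general {d n : ℕ} {F : Type*} [Field F]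
    (I : Ideal (MvPolynomial (Fin d) F))
    (w : Fin d → ℝ) (hw : ∀ i, 0 ≤ w i)
    (hgen : ∀ u v : Fin d →₀ ℕ, wt w u = wt w v → u = v)
    (l : Finset (Fin d →₀ ℕ)) (hst : IsStaircaseF l) (hcard : l.card = n)
    (hinit : staircaseIdeal F l = initialIdealW w I) :
    (∀ μ : Finset (Fin d →₀ ℕ), μ.card = n → (∀ v ∈ μ, memV n v) → IsBasic I μ →
      μ ≠ l → rdot w (sumVec l) < rdot w (sumVec μ)) ∧
    sumVec l ∈ convexHull ℝ
      {p : Fin d → ℝ | ∃ μ : Finset (Fin d →₀ ℕ),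
        μ.card = n ∧ (∀ v ∈ μ, memV n v) ∧ IsBasic I μ ∧ p = sumVec μ} ∧
    (∀ x ∈ convexHull ℝ
      {p : Fin d → ℝ | ∃ μ : Finset (Fin d →₀ ℕ),
        μ.card = n ∧ (∀ v ∈ μ, memV n v) ∧ IsBasic I μ ∧ p = sumVec μ},
      x ≠ sumVec l → rdot w (sumVec l) < rdot w x) := by
  subst hcard
  have hwpos := pos_of_nonneg_of_injective_wt hw @hgen
  have hmin : ∀ μ : Finset (Fin d →₀ ℕ), μ.card = l.card → IsBasic I μ → μ ≠ l →
      rdot w (sumVec l) < rdot w (sumVec μ) := fun μ hμcard hμ hne => by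
    simpa only [rdot_sumVec] using sum_wt_lt_sum_wt hwpos @hgen hinit hμcard hμ hne
  refine ⟨fun μ hμcard _ hμ hne => hmin μ hμcard hμ hne,
    subset_convexHull ℝ _ ⟨l, rfl, fun v hv => memV_card_of_mem hst hv,
      isBasic_of_staircaseIdeal_eq_initialIdealW hst hinit, rfl⟩, fun x hx hne => ?_⟩
  refine (convexHull_min ?_ (convex_setOf_eq_or_lt (concaveOn_rdot w) _) hx).resolve_left hne
  rintro _ ⟨μ, hμcard, -, hμ, rfl⟩
  by_cases hμl : μ = l
  · exact Or.inl (hμl ▸ rfl)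
  · exact Or.inr (hmin μ hμcard hμ hμl)

/-- Let `I` have colength `n`, let `w ∈ ℝ₊^d` be generic, and let `l` be the initial
staircase of `I` under `w`. Then for every basic set `μ ≠ l` contained in `V_n^d` we have
`w·∑l < w·∑μ`; in particular `∑l` is the unique minimizer of `w` over the basis
polytope `B(I) = conv{∑μ : μ basic, μ ⊆ V_n^d}`. -/
theorem initial_staircase_unique_min {d n : ℕ} {F : Type*} [Field F]
    (I : Ideal (MvPolynomial (Fin d) F))
    (hlen : Module.finrank F (MvPolynomial (Fin d) F ⧸ I) = n)
    (w : Fin d → ℝ) (hw : ∀ i, 0 ≤ w i)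
    (hgen : ∀ u v : Fin d →₀ ℕ, wt w u = wt w v → u = v)
    (l : Finset (Fin d →₀ ℕ)) (hst : IsStaircaseF l) (hcard : l.card = n)
    (hinit : staircaseIdeal F l = initialIdealW w I) :
    (∀ μ : Finset (Fin d →₀ ℕ), μ.card = n → (∀ v ∈ μ, memV n v) → IsBasic I μ →
      μ ≠ l → rdot w (sumVec l) < rdot w (sumVec μ)) ∧
    sumVec l ∈ convexHull ℝ
      {p : Fin d → ℝ | ∃ μ : Finset (Fin d →₀ ℕ),
        μ.card = n ∧ (∀ v ∈ μ, memV n v) ∧ IsBasic I μ ∧ p = sumVec μ} ∧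
    (∀ x ∈ convexHull ℝ
      {p : Fin d → ℝ | ∃ μ : Finset (Fin d →₀ ℕ),
        μ.card = n ∧ (∀ v ∈ μ, memV n v) ∧ IsBasic I μ ∧ p = sumVec μ},
      x ≠ sumVec l → rdot w (sumVec l) < rdot w x) :=
  initial_staircase_unique_min_general I w hw hgen l hst hcard hinit
end

section
/- For a monomial ideal I_λ in 𝔽[x₁,…,x_d] corresponding to an n-staircase λ, the only n-subset of ℕ^d that is basic for I_λ is λ itself. -/
open MvPolynomial

/-- For the monomial ideal `I_l` of an `n`-staircase `l`, the only basic `n`-subset of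
`ℕ^d` is `l` itself. -/
theorem monomial_ideal_unique_basic {d n : ℕ} {F : Type*} [Field F]
    (l : Finset (Fin d →₀ ℕ)) (hst : IsStaircaseF l) (hcard : l.card = n)
    (μ : Finset (Fin d →₀ ℕ)) (hμcard : μ.card = n)
    (hμ : IsBasic (staircaseIdeal F l) μ) : μ = l := by
  apply Finset.eq_of_subset_of_card_le _ (by rw [hcard, hμcard])
  intro v hv
  by_contra hvl
  have h1 : (monomial v (1 : F) : MvPolynomial (Fin d) F) ∈
      Submodule.span F {p | ∃ w ∈ μ, p = monomial w (1 : F)} :=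
    Submodule.subset_span ⟨v, hv, rfl⟩
  have h2 : (monomial v (1 : F) : MvPolynomial (Fin d) F) ∈ staircaseIdeal F l :=
    Ideal.subset_span ⟨v, hvl, rfl⟩
  have := hμ _ h1 h2
  simp [MvPolynomial.monomial_eq_zero] at this
end

section
/- For u, v ∈ ℕ^d, the binomial x^u − x^v lies in the lattice ideal I_L = ideal{x^{w⁺} − x^{w⁻} : w ∈ L} of a sublattice L ⊆ ℤ^d if and only if u − v ∈ L. -/
/-!
The algebra map `x^u ↦ [u]` into the group algebra of `ℤ^d / L` kills every generator of `I_L`,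
and distinct classes give distinct basis elements, so `x^u − x^v ∈ I_L` forces
`[u] = [v]`. Conversely, with `w = u − v` one has `x^u − x^v = x^{min(u,v)} (x^{w⁺} − x^{w⁻})`.
-/

open MvPolynomial

/-- Encode a `ℕ^d` vector as a finitely supported exponent vector. -/
noncomputable def toExp {d : ℕ} (u : Fin d → ℕ) : Fin d →₀ ℕ :=
  Finsupp.equivFunOnFinite.symm u

/-- The lattice ideal of a sublattice `L ⊆ ℤ^d`: generated by the binomials
`x^{w⁺} − x^{w⁻}` for `w ∈ L`. -/
noncomputable def latticeIdeal {d : ℕ} (F : Type*) [Field F] (L : Submodule ℤ (Fin d → ℤ)) :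
    Ideal (MvPolynomial (Fin d) F) :=
  Ideal.span {p | ∃ w ∈ L,
    p = monomial (toExp fun i => (w i).toNat) (1 : F) -
        monomial (toExp fun i => (-w i).toNat) (1 : F)}

lemma toExp_add {d : ℕ} (u v : Fin d → ℕ) : toExp (u + v) = toExp u + toExp v := by
  ext; rfl

section
variable {d : ℕ} (R : Type*) [CommSemiring R] (L : Submodule ℤ (Fin d → ℤ))

noncomputable def exponentClass : (Fin d →₀ ℕ) →+ (Fin d → ℤ) ⧸ L :=
  L.mkQ.toAddMonoidHom.comp <|
    AddMonoidHom.pi fun i => (Nat.castAddMonoidHom ℤ).comp (Finsupp.applyAddHom i)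

noncomputable def latticeQuotientAlgHom :
    MvPolynomial (Fin d) R →ₐ[R] AddMonoidAlgebra R ((Fin d → ℤ) ⧸ L) :=
  AddMonoidAlgebra.mapDomainAlgHom R R (exponentClass L)

lemma latticeQuotientAlgHom_monomial_toExp (u : Fin d → ℕ) :
    latticeQuotientAlgHom R L (monomial (toExp u) 1) =
      AddMonoidAlgebra.single (Submodule.Quotient.mk fun i => (u i : ℤ)) 1 :=
  AddMonoidAlgebra.mapDomain_single

end

lemma latticeIdeal_le_ker {d : ℕ} (F : Type*) [Field F] (L : Submodule ℤ (Fin d → ℤ)) :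
    latticeIdeal F L ≤ RingHom.ker (latticeQuotientAlgHom F L) := by
  rw [latticeIdeal, Ideal.span_le]
  rintro _ ⟨w, hw, rfl⟩
  rw [SetLike.mem_coe, RingHom.mem_ker, map_sub, latticeQuotientAlgHom_monomial_toExp,
    latticeQuotientAlgHom_monomial_toExp, sub_eq_zero]
  congr 1
  rw [Submodule.Quotient.eq]
  convert hw using 1
  ext i
  simp only [Pi.sub_apply]; omega

lemma monomial_toExp_sub_monomial_toExp {d : ℕ} {R : Type*} [CommRing R] (u v : Fin d → ℕ) :
    monomial (toExp u) (1 : R) - monomial (toExp v) 1 =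
      monomial (toExp (u ⊓ v)) 1 *
        (monomial (toExp fun i => ((u i : ℤ) - v i).toNat) 1 -
          monomial (toExp fun i => (-((u i : ℤ) - v i)).toNat) 1) := by
  have hu : u = u ⊓ v + fun i => ((u i : ℤ) - v i).toNat := by
    funext i; simp only [Pi.add_apply, Pi.inf_apply]; omega
  have hv : v = u ⊓ v + fun i => (-((u i : ℤ) - v i)).toNat := by
    funext i; simp only [Pi.add_apply, Pi.inf_apply]; omega
  rw [mul_sub, monomial_mul, monomial_mul, one_mul, ← toExp_add, ← toExp_add, ← hu, ← hv]

/-- For `u, v ∈ ℕ^d`, the binomial `x^u − x^v` lies in the lattice ideal `I_L` if and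
only if `u − v ∈ L`. -/
theorem binomial_mem_latticeIdeal_iff {d : ℕ} {F : Type*} [Field F]
    (L : Submodule ℤ (Fin d → ℤ)) (u v : Fin d → ℕ) :
    (monomial (toExp u) (1 : F) - monomial (toExp v) (1 : F) ∈ latticeIdeal F L) ↔
      (fun i => (u i : ℤ) - (v i : ℤ)) ∈ L := by
  constructor
  · intro hmem
    have hker := latticeIdeal_le_ker F L hmem
    rw [RingHom.mem_ker, map_sub, latticeQuotientAlgHom_monomial_toExp,
      latticeQuotientAlgHom_monomial_toExp, sub_eq_zero,
      AddMonoidAlgebra.single_left_inj one_ne_zero, Submodule.Quotient.eq] at hker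
    exact hker
  · intro hL
    rw [monomial_toExp_sub_monomial_toExp]
    exact Ideal.mul_mem_left _ _ (Ideal.subset_span ⟨_, hL, rfl⟩)
end

section
/- Let I ⊆ 𝔽[x₁,…,x_d] be an ideal with dim_𝔽(𝔽[x]/I) = n, let U_n^d = {u + e_i : u ∈ V_n^d, 0 ≤ i ≤ d} (with e₀ = 0), let S_U = lin{x^u : u ∈ U_n^d}, and let I_U = I ∩ S_U. Then dim_𝔽(I_U) = |U_n^d| − n. -/
/-!
Fix a monomial order. The exponents `v` for which `x^v` is not congruent modulo `I` to a
combination of smaller monomials (the standard monomials, i.e. the complement of the initial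
ideal) form a lower set whose classes are a basis of `𝔽[x]/I`. A lower set of size `n` lies in
`V_n^d`, because the box below `v` has `∏ (v_i + 1)` elements. Hence the monomials with exponent
in `V_n^d ⊆ U_n^d` already span `𝔽[x]/I`, the quotient map `S_U → 𝔽[x]/I` is onto, and its kernel
`I_U` has dimension `|U_n^d| - n` by rank-nullity.
-/

open MvPolynomial

/-- Membership in `U_n^d = {v + e_i : v ∈ V_n^d, 0 ≤ i ≤ d}` (with `e₀ = 0`). -/
def memU {d : ℕ} (n : ℕ) (u : Fin d →₀ ℕ) : Prop :=
  ∃ v : Fin d →₀ ℕ, memV n v ∧ (u = v ∨ ∃ i : Fin d, u = v + Finsupp.single i 1)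

open Submodule

section StandardSet

variable {K M ι : Type*} [DivisionRing K] [AddCommGroup M] [Module K M] [LinearOrder ι]

variable (K) in
def standardSet (f : ι → M) : Set ι := {i | f i ∉ span K (f '' Set.Iio i)}

theorem linearIndepOn_standardSet (f : ι → M) : LinearIndepOn K f (standardSet K f) := by
  classical
  refine linearIndepOn_of_finite _ fun t ht htfin => ?_
  lift t to Finset ι using htfin
  induction t using Finset.induction_on_max with
  | empty => simp
  | insert a s hlt ih =>
    have has : a ∉ (s : Set ι) := fun h => (hlt a h).false
    rw [Finset.coe_insert, Set.insert_subset_iff] at ht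
    rw [Finset.coe_insert, linearIndepOn_insert has]
    exact ⟨ih ht.2, fun h => ht.1 (span_mono (Set.image_mono hlt) h)⟩

theorem mem_span_image_standardSet [WellFoundedLT ι] (f : ι → M) (i : ι) :
    f i ∈ span K (f '' standardSet K f) := by
  induction i using WellFoundedLT.induction with
  | _ i ih =>
    by_cases hi : i ∈ standardSet K f
    · exact subset_span ⟨i, hi, rfl⟩
    · refine span_le.mpr ?_ (not_not.mp hi)
      rintro _ ⟨j, hj, rfl⟩
      exact ih j hj

end StandardSet

theorem Submodule.finrank_ker_inf_add_finrank {K V W : Type*} [DivisionRing K]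
    [AddCommGroup V] [Module K V] [AddCommGroup W] [Module K W]
    (f : V →ₗ[K] W) {S : Submodule K V} [FiniteDimensional K S] (hS : S.map f = ⊤) :
    Module.finrank K ↥(LinearMap.ker f ⊓ S) + Module.finrank K W = Module.finrank K S := by
  have hker : (LinearMap.ker f).comap S.subtype = (LinearMap.ker f ⊓ S).comap S.subtype := by
    rw [comap_inf, comap_subtype_self, inf_top_eq]
  have := (f.domRestrict S).finrank_range_add_finrank_ker
  rw [LinearMap.range_domRestrict, hS, finrank_top, LinearMap.ker_domRestrict, hker,
    (comapSubtypeEquivOfLe inf_le_right).finrank_eq] at this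
  omega

theorem Finsupp.card_Iic_eq_prod {σ : Type*} [Fintype σ] [DecidableEq σ] (v : σ →₀ ℕ) :
    (Finset.Iic v).card = ∏ i, (v i + 1) := by
  rw [Finsupp.card_Iic, ← Finset.prod_subset (Finset.subset_univ v.support)
    (fun i _ hi => by simp [Finsupp.notMem_support_iff.mp hi])]
  exact Finset.prod_congr rfl fun i _ => Nat.card_Iic _

theorem MvPolynomial.finrank_restrictSupport {σ K : Type*} [Field K] (U : Finset (σ →₀ ℕ)) :
    Module.finrank K (restrictSupport K (U : Set (σ →₀ ℕ))) = U.card := by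
  simp [Module.finrank_eq_card_basis (basisRestrictSupport K (U : Set (σ →₀ ℕ)))]

theorem MvPolynomial.span_image_monomial_eq_top {σ K A : Type*} [Field K] [Ring A]
    [Algebra K A] {φ : MvPolynomial σ K →ₐ[K] A} (hφ : Function.Surjective φ) :
    span K (Set.range fun v => φ (monomial v 1)) = ⊤ := by
  have : (restrictSupport K Set.univ).map φ.toLinearMap =
      (⊤ : Submodule K (MvPolynomial σ K)).map φ.toLinearMap := by
    rw [restrictSupport_univ]
  rwa [restrictSupport_eq_span, map_span, Submodule.map_top, LinearMap.range_eq_top.mpr hφ,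
    Set.image_univ, ← Set.range_comp] at this

namespace MonomialOrder

variable {σ K A : Type*} [Field K] [Ring A] [Algebra K A]
  (m : MonomialOrder σ) (φ : MvPolynomial σ K →ₐ[K] A)

/-- The complement of the initial ideal of `ker φ` with respect to `m` (the staircase `λ`). -/
def standardMonomials : Set (σ →₀ ℕ) :=
  m.toSyn.symm '' standardSet K (fun s => φ (monomial (m.toSyn.symm s) 1))

variable {m φ} in
theorem mem_standardMonomials {v : σ →₀ ℕ} :
    v ∈ m.standardMonomials φ ↔
      φ (monomial v 1) ∉ span K ((fun w => φ (monomial w 1)) '' {w | m.toSyn w < m.toSyn v}) := by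
  have hIio : m.toSyn.symm '' Set.Iio (m.toSyn v) = {w | m.toSyn w < m.toSyn v} :=
    m.toSyn.toEquiv.image_symm_eq_preimage _
  rw [standardMonomials, ← hIio, Set.image_image]
  change v ∈ m.toSyn.toEquiv.symm '' _ ↔ _
  rw [Equiv.image_symm_eq_preimage]
  simp [standardSet]

theorem isLowerSet_standardMonomials : IsLowerSet (m.standardMonomials φ) := by
  intro v u huv hv
  obtain ⟨c, rfl⟩ := exists_add_of_le huv
  rw [mem_standardMonomials] at hv ⊢
  contrapose! hv
  -- multiplying by `x^c` turns a relation through `m`-smaller monomials for `x^u` into one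
  -- for `x^(u + c)`, since adding `c` is strictly monotone for `m`
  have hmul : ∀ w, φ (monomial (w + c) 1) = φ (monomial c 1) * φ (monomial w 1) := fun w => by
    rw [← map_mul, monomial_mul, one_mul, add_comm]
  have hmem := mem_map_of_mem (f := LinearMap.mulLeft K (φ (monomial c 1))) hv
  rw [map_span, ← Set.image_comp] at hmem
  refine hmul u ▸ span_mono ?_ hmem
  rintro _ ⟨w, hw, rfl⟩
  refine ⟨w + c, ?_, hmul w⟩
  simpa only [Set.mem_ofPred_eq, map_add] using add_lt_add_left hw (m.toSyn c)

theorem linearIndepOn_standardMonomials :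
    LinearIndepOn K (fun v => φ (monomial v 1)) (m.standardMonomials φ) :=
  .image_of_comp _ _ (linearIndepOn_standardSet _)

theorem span_image_standardMonomials (hφ : Function.Surjective φ) :
    span K ((fun v => φ (monomial v 1)) '' m.standardMonomials φ) = ⊤ := by
  rw [eq_top_iff, ← span_image_monomial_eq_top hφ, span_le]
  rintro _ ⟨v, rfl⟩
  simpa [standardMonomials, Set.image_image] using
    mem_span_image_standardSet (K := K) (fun s => φ (monomial (m.toSyn.symm s) 1)) (m.toSyn v)

theorem prod_add_one_le_finrank_of_mem_standardMonomials [Fintype σ] [FiniteDimensional K A]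
    {v : σ →₀ ℕ} (hv : v ∈ m.standardMonomials φ) : ∏ i, (v i + 1) ≤ Module.finrank K A := by
  classical
  have hind : LinearIndepOn K (fun v => φ (monomial v 1)) (Finset.Iic v : Set (σ →₀ ℕ)) :=
    (m.linearIndepOn_standardMonomials φ).mono fun u hu =>
      m.isLowerSet_standardMonomials φ (Finset.mem_Iic.mp hu) hv
  simpa [Finsupp.card_Iic_eq_prod] using hind.fintype_card_le_finrank

end MonomialOrder

theorem MvPolynomial.span_image_monomial_prod_add_one_le_finrank {σ K A : Type*} [Fintype σ]
    [LinearOrder σ] [Field K] [Ring A] [Algebra K A] [FiniteDimensional K A]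
    {φ : MvPolynomial σ K →ₐ[K] A} (hφ : Function.Surjective φ) :
    span K ((fun v => φ (monomial v 1)) '' {v | ∏ i, (v i + 1) ≤ Module.finrank K A}) = ⊤ :=
  top_unique <| (MonomialOrder.lex.span_image_standardMonomials φ hφ).ge.trans <|
    span_mono <| Set.image_mono fun _ hv =>
      MonomialOrder.lex.prod_add_one_le_finrank_of_mem_standardMonomials φ hv

theorem MvPolynomial.span_setOf_monomial_eq_restrictSupport {σ K : Type*} [Field K]
    (U : Finset (σ →₀ ℕ)) :
    span K {p | ∃ u ∈ U, p = monomial u (1 : K)} = restrictSupport K (U : Set (σ →₀ ℕ)) := by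
  rw [restrictSupport_eq_span]
  congr 1
  ext p
  simp [eq_comm]

theorem not_memU_zero {d : ℕ} (u : Fin d →₀ ℕ) : ¬ memU 0 u :=
  fun ⟨v, hv, _⟩ => (Finset.prod_pos fun i _ => Nat.succ_pos (v i)).not_ge hv

/-- Let `I` be an ideal of colength `n` in `F[x₁,…,x_d]`, let `U` be the finite set
`U_n^d`, let `S_U` be the span of the monomials with exponent in `U`, and let
`I_U = I ∩ S_U`. Then `dim_F(I_U) = |U_n^d| − n`. -/
theorem dim_I_inter_SU {d n : ℕ} {F : Type*} [Field F]
    (I : Ideal (MvPolynomial (Fin d) F))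
    (hlen : Module.finrank F (MvPolynomial (Fin d) F ⧸ I) = n)
    (U : Finset (Fin d →₀ ℕ)) (hU : ∀ u, u ∈ U ↔ memU n u) :
    Module.finrank F
      ↥(Submodule.restrictScalars F I ⊓
        Submodule.span F {p | ∃ u ∈ U, p = monomial u (1 : F)}) = U.card - n := by
  rw [span_setOf_monomial_eq_restrictSupport]
  -- `finrank` is `0` also for an infinite-dimensional quotient, so `n = 0` is treated apart.
  rcases Nat.eq_zero_or_pos n with rfl | hn
  · obtain rfl : U = ∅ :=
      Finset.eq_empty_of_forall_notMem fun u hu => not_memU_zero u ((hU u).mp hu)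
    rw [Finset.coe_empty, restrictSupport_eq_span, Set.image_empty, span_empty, inf_bot_eq,
      finrank_bot, Finset.card_empty]
  have : FiniteDimensional F (MvPolynomial (Fin d) F ⧸ I) := .of_finrank_pos (hlen ▸ hn)
  have : FiniteDimensional F (restrictSupport F (U : Set (Fin d →₀ ℕ))) :=
    .of_basis (basisRestrictSupport F _)
  let π := (Ideal.Quotient.mkₐ F I).toLinearMap
  have hker : LinearMap.ker π = I.restrictScalars F := by
    ext p
    simp [π, Ideal.Quotient.eq_zero_iff_mem]
  have hmap : (restrictSupport F (U : Set (Fin d →₀ ℕ))).map π = ⊤ := by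
    rw [eq_top_iff, ← span_image_monomial_prod_add_one_le_finrank
      (Ideal.Quotient.mkₐ_surjective F I), restrictSupport_eq_span, map_span, ← Set.image_comp]
    exact span_mono (Set.image_mono fun v hv => (hU v).mpr ⟨v, hlen ▸ hv, Or.inl rfl⟩)
  have := finrank_ker_inf_add_finrank π hmap
  rw [hker, finrank_restrictSupport, hlen] at this
  omega
end

section
/- Let B ⊂ ℝ^d be a polytope and P = B + ℝ₊^d. Then a vertex v of B is a vertex of P if and only if some strictly positive vector w ∈ ℝ₊^d is uniquely minimized over B at v; moreover every vertex of P is a vertex of B. -/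
open scoped Pointwise

/-- `x` is a vertex of `C`: it belongs to `C` and some linear functional is uniquely
minimized over `C` at `x`. -/
def IsVertexOf {d : ℕ} (C : Set (Fin d → ℝ)) (x : Fin d → ℝ) : Prop :=
  x ∈ C ∧ ∃ w : Fin d → ℝ, ∀ y ∈ C, y ≠ x → rdot w x < rdot w y

/-!
If `w` is uniquely minimized over `P = B + ℝ₊^d` at `x`, then moving from `x` along a
coordinate direction `eᵢ` stays in `P` and must increase `w`, so `w` is strictly positive;
a positive `w` cannot be uniquely minimized at `b + r` with `r ≠ 0` since `b` does better,
so `x ∈ B`. Conversely, a positive `w` uniquely minimized over `B` at `x` is uniquely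
minimized over `P` there, as adding `r ≥ 0` does not decrease `w` and strictly increases
it unless `r = 0`.
-/

section

variable {d : ℕ}

def orthant (d : ℕ) : Set (Fin d → ℝ) := {r | ∀ i, 0 ≤ r i}

def UniquelyMinimizes (C : Set (Fin d → ℝ)) (w x : Fin d → ℝ) : Prop :=
  ∀ y ∈ C, y ≠ x → rdot w x < rdot w y

lemma UniquelyMinimizes.mono {C D : Set (Fin d → ℝ)} {w x : Fin d → ℝ}
    (h : UniquelyMinimizes D w x) (hCD : C ⊆ D) : UniquelyMinimizes C w x :=
  fun y hy hne => h y (hCD hy) hne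

lemma rdot_add_right (w x y : Fin d → ℝ) : rdot w (x + y) = rdot w x + rdot w y := by
  simp [rdot, mul_add, Finset.sum_add_distrib]

lemma rdot_single_one (w : Fin d → ℝ) (i : Fin d) : rdot w (Pi.single i 1) = w i := by
  simp [rdot, Pi.single_apply]

lemma rdot_nonneg {w r : Fin d → ℝ} (hw : ∀ i, 0 ≤ w i) (hr : r ∈ orthant d) :
    0 ≤ rdot w r :=
  Finset.sum_nonneg fun i _ => mul_nonneg (hw i) (hr i)

lemma rdot_pos {w r : Fin d → ℝ} (hw : ∀ i, 0 < w i) (hr : r ∈ orthant d) (hr0 : r ≠ 0) :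
    0 < rdot w r := by
  obtain ⟨j, hj⟩ := Function.ne_iff.mp hr0
  exact Finset.sum_pos' (fun i _ => mul_nonneg (hw i).le (hr i))
    ⟨j, Finset.mem_univ j, mul_pos (hw j) ((hr j).lt_of_ne' hj)⟩

lemma single_one_mem_orthant (i : Fin d) : (Pi.single i 1 : Fin d → ℝ) ∈ orthant d := by
  intro j
  rcases eq_or_ne j i with rfl | h <;> simp [*]

lemma subset_add_orthant (B : Set (Fin d → ℝ)) : B ⊆ B + orthant d :=
  fun b hb => ⟨b, hb, 0, fun _ => le_rfl, add_zero b⟩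

lemma add_mem_add_orthant {B : Set (Fin d → ℝ)} {x r : Fin d → ℝ} (hx : x ∈ B + orthant d)
    (hr : r ∈ orthant d) : x + r ∈ B + orthant d := by
  obtain ⟨b, hb, s, hs, rfl⟩ := hx
  exact ⟨b, hb, s + r, fun i => add_nonneg (hs i) (hr i), (add_assoc b s r).symm⟩

lemma UniquelyMinimizes.pos_of_add_orthant {B : Set (Fin d → ℝ)} {w x : Fin d → ℝ}
    (h : UniquelyMinimizes (B + orthant d) w x) (hx : x ∈ B + orthant d) (i : Fin d) :
    0 < w i := by
  have hne : x + Pi.single i 1 ≠ x := by simp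
  have := h _ (add_mem_add_orthant hx (single_one_mem_orthant i)) hne
  rwa [rdot_add_right, rdot_single_one, lt_add_iff_pos_right] at this

lemma uniquelyMinimizes_add_orthant_iff {B : Set (Fin d → ℝ)} {w x : Fin d → ℝ} (hx : x ∈ B) :
    UniquelyMinimizes (B + orthant d) w x ↔ (∀ i, 0 < w i) ∧ UniquelyMinimizes B w x := by
  refine ⟨fun h => ⟨h.pos_of_add_orthant (subset_add_orthant B hx),
    h.mono (subset_add_orthant B)⟩, ?_⟩
  rintro ⟨hw, hmin⟩ _ ⟨b, hb, r, hr, rfl⟩ hne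
  rw [rdot_add_right]
  rcases eq_or_ne b x with rfl | hbx
  · have hr0 : r ≠ 0 := by rintro rfl; exact hne (add_zero b)
    linarith [rdot_pos hw hr hr0]
  · linarith [hmin b hb hbx, rdot_nonneg (fun i => (hw i).le) hr]

lemma IsVertexOf.mem_of_add_orthant {B : Set (Fin d → ℝ)} {x : Fin d → ℝ}
    (h : IsVertexOf (B + orthant d) x) : x ∈ B := by
  obtain ⟨hxP, w, hw⟩ := h
  obtain ⟨b, hb, r, hr, rfl⟩ := Set.mem_add.mp hxP
  rcases eq_or_ne (b + r) b with hbr | hbr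
  · rwa [hbr]
  have hpos := UniquelyMinimizes.pos_of_add_orthant hw hxP
  have hlt := hw b (subset_add_orthant B hb) hbr.symm
  rw [rdot_add_right] at hlt
  linarith [rdot_nonneg (fun i => (hpos i).le) hr]

lemma isVertexOf_add_orthant_iff {B : Set (Fin d → ℝ)} {x : Fin d → ℝ} (hx : x ∈ B) :
    IsVertexOf (B + orthant d) x ↔ ∃ w, (∀ i, 0 < w i) ∧ UniquelyMinimizes B w x := by
  simp only [IsVertexOf, subset_add_orthant B hx, true_and]
  exact exists_congr fun w => uniquelyMinimizes_add_orthant_iff hx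

end

theorem vertices_of_polytope_plus_orthant_general {d : ℕ} (S : Set (Fin d → ℝ)) :
    (∀ x, IsVertexOf (convexHull ℝ S + {r : Fin d → ℝ | ∀ i, 0 ≤ r i}) x →
      IsVertexOf (convexHull ℝ S) x) ∧
    (∀ x, IsVertexOf (convexHull ℝ S) x →
      (IsVertexOf (convexHull ℝ S + {r : Fin d → ℝ | ∀ i, 0 ≤ r i}) x ↔
        ∃ w : Fin d → ℝ, (∀ i, 0 < w i) ∧
          ∀ y ∈ convexHull ℝ S, y ≠ x → rdot w x < rdot w y)) := by
  refine ⟨fun x hx => ?_, fun x hx => isVertexOf_add_orthant_iff hx.1⟩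
  have hxB : x ∈ convexHull ℝ S := IsVertexOf.mem_of_add_orthant hx
  obtain ⟨w, -, hw⟩ := (isVertexOf_add_orthant_iff hxB).mp hx
  exact ⟨hxB, w, hw⟩

/-- Let `B ⊂ ℝ^d` be a polytope and `P = B + ℝ₊^d`. Then every vertex of `P` is a
vertex of `B`, and a vertex `x` of `B` is a vertex of `P` if and only if some strictly
positive `w` is uniquely minimized over `B` at `x`. -/
theorem vertices_of_polytope_plus_orthant {d : ℕ} (S : Set (Fin d → ℝ))
    (hS : S.Finite) :
    (∀ x, IsVertexOf (convexHull ℝ S + {r : Fin d → ℝ | ∀ i, 0 ≤ r i}) x →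
      IsVertexOf (convexHull ℝ S) x) ∧
    (∀ x, IsVertexOf (convexHull ℝ S) x →
      (IsVertexOf (convexHull ℝ S + {r : Fin d → ℝ | ∀ i, 0 ≤ r i}) x ↔
        ∃ w : Fin d → ℝ, (∀ i, 0 < w i) ∧
          ∀ y ∈ convexHull ℝ S, y ≠ x → rdot w x < rdot w y)) :=
  vertices_of_polytope_plus_orthant_general S
end
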